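/- For every matroid M with finite ground set E and rank function r, the identity (y-1)^{r(E)} T_M(x,y) = \bar{\chi}_M((x-1)(y-1), y) holds, where \bar{\chi}_M(\lambda, t) = \sum_{X \in F_M} t^{|X|} \chi_{M/X}(\lambda) is the coboundary polynomial of M, F_M is the set of flats of M, and \chi_N(\lambda) = \sum_{A \subseteq E(N)} (-1)^{|A|} \lambda^{r_N(E(N)) - r_N(A)} is the characteristic polynomial of a matroid N. -/

import Mathlib

/-!
Write `λ = (x-1)(y-1)`. Since `r(A) ≤ r(E)` and `r(A) ≤ |A|`, the left side is
`∑_A λ^{r(E)-r(A)} (y-1)^{|A|}`. Expand `(y-1)^{|A|} = ∑_{B ⊆ A} y^{|B|} (-1)^{|A \ B|}` and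
sum over `B` first: the inner sum over `A = B ⊔ C` is `χ_{M/B}(λ)`, because
`r_{M/B}(C) = r(B ∪ C) - r(B)`. If `B` is not a flat, any `e ∈ cl(B) \ B` is a loop of `M/B`,
and the characteristic polynomial of a matroid with a loop vanishes (pair `A` with `A ∪ {e}`).
So only the flats contribute, which is the coboundary polynomial.
-/

open MvPolynomial Finset
open scoped Matroid

namespace TuttePaper

open Classical

variable {α : Type*}

/-- The rank of a set in a matroid: the maximum cardinality of an independent subset. -/
noncomputable def rk (M : Matroid α) (A : Set α) : ℕ :=
  sSup {n | ∃ I, M.Indep I ∧ I ⊆ A ∧ I.ncard = n}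

/-- The Tutte polynomial of a matroid with finite ground set, as an element of ℤ[x,y];
the variable `X 0` plays the role of `x` and `X 1` that of `y`:
`T_M(x,y) = ∑_{A ⊆ E} (x-1)^(r(E)-r(A)) (y-1)^(|A|-r(A))`. -/
noncomputable def tutte (M : Matroid α) : MvPolynomial (Fin 2) ℤ :=
  if hE : M.E.Finite then
    ∑ A ∈ hE.toFinset.powerset,
      (X 0 - 1) ^ (rk M M.E - rk M ↑A) * (X 1 - 1) ^ (A.card - rk M ↑A)
  else 0

/-- The Tutte polynomial with `x` evaluated at `1`, i.e. `T_M(1,y)`, as an element of ℤ[x,y]. -/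
noncomputable def tutteX1 (M : Matroid α) : MvPolynomial (Fin 2) ℤ :=
  eval₂ C (fun i => if i = 0 then 1 else X 1) (tutte M)

/-- A loop of a matroid: an element whose singleton has rank zero. -/
def IsLoop (M : Matroid α) (e : α) : Prop := rk M {e} = 0

/-- A coloop of a matroid: an element contained in every basis. -/
def IsColoop (M : Matroid α) (e : α) : Prop := ∀ B, M.IsBase B → e ∈ B

/-- A circuit of a matroid: a minimal dependent set. -/
def IsCircuit (M : Matroid α) (C : Set α) : Prop :=
  C ⊆ M.E ∧ ¬ M.Indep C ∧ ∀ D ⊂ C, M.Indep D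

/-- A hyperplane of a matroid: a flat of rank `r(M) - 1`. -/
def IsHyperplane (M : Matroid α) (H : Set α) : Prop :=
  M.IsFlat H ∧ rk M H + 1 = rk M M.E

/-- Deletion of a set of elements from a matroid. -/
def deleteSet (M : Matroid α) (D : Set α) : Matroid α := M ↾ (M.E \ D)

/-- Contraction of a set of elements in a matroid, `M/C = (M✶ \ C)✶`. -/
def contractSet (M : Matroid α) (C : Set α) : Matroid α := ((M✶) ↾ (M.E \ C))✶

/-- Deletion of a single element. -/
def deleteElem (M : Matroid α) (e : α) : Matroid α := deleteSet M {e}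

/-- Contraction of a single element. -/
def contractElem (M : Matroid α) (e : α) : Matroid α := contractSet M {e}

/-- A matroid is paving if every circuit has size at least the rank of the matroid. -/
def Paving (M : Matroid α) : Prop := ∀ C, IsCircuit M C → rk M M.E ≤ C.ncard

/-- A matroid is sparse paving if it is paving and any two distinct circuits of size `r(M)`
have symmetric difference of size greater than two. -/
def SparsePaving (M : Matroid α) : Prop :=
  Paving M ∧ ∀ C₁ C₂, IsCircuit M C₁ → IsCircuit M C₂ →
    C₁.ncard = rk M M.E → C₂.ncard = rk M M.E → C₁ ≠ C₂ → 2 < (symmDiff C₁ C₂).ncard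

/-- An `m`-partition of a set `E`: a collection of at least two subsets of `E`, each with at
least `m` elements, such that every `m`-element subset of `E` is contained in exactly one
member of the collection. -/
def IsMPartition (m : ℕ) (E : Set α) (T : Set (Set α)) : Prop :=
  1 < T.ncard ∧ (∀ B ∈ T, B ⊆ E ∧ m ≤ B.ncard) ∧
    ∀ S ⊆ E, S.ncard = m → ∃! B, B ∈ T ∧ S ⊆ B

/-- `tcoef M i j` is the coefficient `t_{ij}` of `x^i y^j` in the Tutte polynomial of `M`. -/
noncomputable def tcoef (M : Matroid α) (i j : ℕ) : ℤ :=
  MvPolynomial.coeff (Finsupp.single (0 : Fin 2) i + Finsupp.single (1 : Fin 2) j) (tutte M)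

/-- The characteristic polynomial `χ_N(λ) = ∑_{A ⊆ E} (-1)^{|A|} λ^{r(E)-r(A)}` of a matroid,
evaluated at an element `l` of a commutative ring. -/
noncomputable def charEval {R : Type*} [CommRing R] (N : Matroid α) (l : R) : R :=
  if hE : N.E.Finite then
    ∑ A ∈ hE.toFinset.powerset, (-1 : R) ^ A.card * l ^ (rk N N.E - rk N ↑A)
  else 0

/-- Crapo's coboundary polynomial `χ̄_M(λ,t) = ∑_{X flat of M} t^{|X|} χ_{M/X}(λ)`,
evaluated at elements `l`, `t` of a commutative ring. -/
noncomputable def cobEval {R : Type*} [CommRing R] (M : Matroid α) (l t : R) : R :=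
  if hE : M.E.Finite then
    (hE.toFinset.powerset.filter (fun F : Finset α => M.IsFlat ↑F)).sum
      (fun F => t ^ F.card * charEval (contractSet M ↑F) l)
  else 0


lemma _root_.ENat.sSup_setOf_natCast_le (e : ℕ∞) : sSup {n : ℕ | (n : ℕ∞) ≤ e} = e.toNat := by
  induction e using ENat.recTopCoe with
  | top => simp
  | coe m => simp only [Nat.cast_le, ENat.toNat_natCast]; exact csSup_Iic

lemma _root_.Matroid.eRk_contract_add_eRk (M : Matroid α) (C X : Set α) :
    (M ／ C).eRk X + M.eRk C = M.eRk (X ∪ C) := by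
  obtain ⟨I, hI⟩ := M.exists_isBasis' C
  obtain ⟨K, hK, hIK⟩ := hI.indep.subset_isBasis'_of_subset
    (hI.subset.trans Set.subset_union_right : I ⊆ X ∪ C)
  have hKC : K ∩ C = I := (hI.eq_of_subset_indep (hK.indep.inter_right C)
    (Set.subset_inter hIK hI.subset) Set.inter_subset_right).symm
  have hcon : (M ／ C).IsBasis' (K \ C) ((X ∪ C) \ C) :=
    hK.contract_isBasis' hI
      (hK.indep.subset (Set.union_subset Set.sdiff_subset hIK))
  have hC : (M ／ C).eRk C = 0 := by
    rw [← Matroid.eRk_inter_ground, Matroid.contract_ground, Set.inter_sdiff_self,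
      Matroid.eRk_empty]
  rw [← Matroid.eRk_eq_eRk_sdiff_eRk_le_zero X hC.le, ← Set.union_sdiff_right,
    hcon.eRk_eq_encard, hI.eRk_eq_encard, hK.eRk_eq_encard, ← hKC,
    Set.encard_sdiff_add_encard_inter]

-- For `X` of infinite rank both sides are the junk value `0`.
lemma rk_eq_toNat_eRk (M : Matroid α) (X : Set α) : rk M X = (M.eRk X).toNat := by
  have hS : {n | ∃ I, M.Indep I ∧ I ⊆ X ∧ I.ncard = n} =
      {n : ℕ | (n : ℕ∞) ≤ M.eRk X} := by
    ext n
    constructor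
    · rintro ⟨I, hI, hIX, rfl⟩
      exact I.ncard_le_encard.trans (hI.encard_le_eRk_of_subset hIX)
    · intro h
      obtain ⟨I, hIX, hI, hIn⟩ := Matroid.le_eRk_iff.1 h
      exact ⟨I, hI, hIX, by rw [Set.ncard_def, hIn, ENat.toNat_natCast]⟩
  rw [rk, hS, ENat.sSup_setOf_natCast_le]

section rank

variable {M : Matroid α} {X Y : Set α}

lemma cast_rk_eq_eRk (h : M.IsRkFinite X) : (rk M X : ℕ∞) = M.eRk X := by
  rw [rk_eq_toNat_eRk, ENat.natCast_toNat (Matroid.eRk_ne_top_iff.2 h)]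

lemma rk_mono [M.RankFinite] (hXY : X ⊆ Y) : rk M X ≤ rk M Y := by
  exact_mod_cast (cast_rk_eq_eRk (M.isRkFinite_set X)).trans_le
    ((M.eRk_mono hXY).trans_eq (cast_rk_eq_eRk (M.isRkFinite_set Y)).symm)

lemma rk_le_card (M : Matroid α) (A : Finset α) : rk M A ≤ A.card := by
  have h := M.eRk_le_encard A
  rw [Set.encard_coe_eq_coe_finsetCard] at h
  rw [rk_eq_toNat_eRk]
  exact ENat.toNat_le_of_le_natCast h

lemma rk_insert_of_mem_closure {e : α} (he : e ∈ M.closure X) : rk M (insert e X) = rk M X := by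
  rw [rk_eq_toNat_eRk, rk_eq_toNat_eRk, ← Matroid.eRk_insert_closure_eq, Set.insert_eq_of_mem he,
    Matroid.eRk_closure_eq]

lemma rk_contract_add_rk [M.RankFinite] (C D : Set α) :
    rk (M ／ C) D + rk M C = rk M (D ∪ C) := by
  have h := M.eRk_contract_add_eRk C D
  rw [← cast_rk_eq_eRk ((M ／ C).isRkFinite_set D), ← cast_rk_eq_eRk (M.isRkFinite_set C),
    ← cast_rk_eq_eRk (M.isRkFinite_set _)] at h
  exact_mod_cast h

end rank

lemma _root_.Finset.sum_powerset_sum_powerset_comm {β : Type*} [AddCommMonoid β]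
    [DecidableEq α] (E : Finset α) (f : Finset α → Finset α → β) :
    ∑ A ∈ E.powerset, ∑ B ∈ A.powerset, f A B =
      ∑ B ∈ E.powerset, ∑ C ∈ (E \ B).powerset, f (C ∪ B) B := by
  rw [Finset.sum_comm' (t' := E.powerset) (s' := fun B => Finset.Icc B E) (by
    intro A B
    simp only [Finset.mem_powerset, Finset.mem_Icc]
    exact ⟨fun h => ⟨⟨h.2, h.1⟩, h.2.trans h.1⟩, fun h => ⟨h.1.2, h.1.1⟩⟩)]
  refine Finset.sum_congr rfl fun B hB => ?_
  rw [Finset.Icc_eq_image_powerset (Finset.mem_powerset.1 hB), Finset.sum_image]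
  · simp only [Finset.union_comm B]
  · intro C₁ h₁ C₂ h₂ h
    have hd : ∀ C ∈ (E \ B).powerset, Disjoint B C := fun C hC =>
      (Finset.disjoint_sdiff.mono_right (Finset.mem_powerset.1 hC))
    rw [← Finset.union_sdiff_cancel_left (hd C₁ h₁),
      ← Finset.union_sdiff_cancel_left (hd C₂ h₂)]
    exact congrArg (· \ B) h

lemma pow_mul_pow_sub_mul_pow_sub {R : Type*} [CommMonoid R] (a b : R) {k r n : ℕ}
    (hr : k ≤ r) (hn : k ≤ n) :
    b ^ r * (a ^ (r - k) * b ^ (n - k)) = (a * b) ^ (r - k) * b ^ n := by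
  obtain ⟨r, rfl⟩ := Nat.exists_eq_add_of_le hr
  obtain ⟨n, rfl⟩ := Nat.exists_eq_add_of_le hn
  simp only [Nat.add_sub_cancel_left, mul_pow, pow_add]
  ac_rfl

lemma contractSet_eq_contract (M : Matroid α) (C : Set α) : contractSet M C = M ／ C := rfl

section charEval

variable {R : Type*} [CommRing R]

lemma charEval_eq_zero_of_isLoop {N : Matroid α} (hE : N.E.Finite) {e : α} (he : N.IsLoop e)
    (l : R) : charEval N l = 0 := by
  have heE : e ∈ hE.toFinset := hE.mem_toFinset.2 he.mem_ground
  rw [charEval, dif_pos hE, ← Finset.insert_erase heE,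
    Finset.sum_powerset_insert (Finset.notMem_erase e _), ← Finset.sum_add_distrib]
  refine Finset.sum_eq_zero fun A hA => ?_
  have heA : e ∉ A := fun h => Finset.notMem_erase e _ (Finset.mem_powerset.1 hA h)
  rw [Finset.coe_insert, rk_insert_of_mem_closure (he.mem_closure _),
    Finset.card_insert_of_notMem heA, pow_succ]
  ring

lemma charEval_contract_eq_zero_of_not_isFlat {M : Matroid α} (hE : M.E.Finite) {B : Set α}
    (hB : B ⊆ M.E) (hflat : ¬ M.IsFlat B) (l : R) : charEval (M ／ B) l = 0 := by
  obtain ⟨e, heB, he⟩ := Set.not_subset.1 fun h : M.closure B ⊆ B =>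
    hflat (Matroid.isFlat_iff_closure_eq.2 (h.antisymm (M.subset_closure B hB)))
  exact charEval_eq_zero_of_isLoop (hE.subset (M.contract_ground_subset_ground B))
    (Matroid.contract_isLoop_iff_mem_closure.2 ⟨heB, he⟩) l

lemma charEval_contract_eq_sum {M : Matroid α} (hE : M.E.Finite) {B : Finset α}
    (hB : ↑B ⊆ M.E) (l : R) :
    charEval (M ／ ↑B) l =
      ∑ C ∈ (hE.toFinset \ B).powerset, (-1) ^ C.card * l ^ (rk M M.E - rk M ↑(C ∪ B)) := by
  have : M.Finite := ⟨hE⟩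
  have hground : (M ／ ↑B).ground_finite.toFinset = hE.toFinset \ B := by ext; simp
  rw [charEval, dif_pos (M ／ ↑B).ground_finite, hground]
  refine Finset.sum_congr rfl fun C _ => ?_
  have hE' := rk_contract_add_rk (M := M) B (M ／ ↑B).E
  have hC := rk_contract_add_rk (M := M) B C
  rw [Matroid.contract_ground, Set.sdiff_union_of_subset hB] at hE'
  rw [Matroid.contract_ground, Finset.coe_union]
  congr 2
  omega

end charEval

lemma pow_rk_mul_sum_eq_cobEval {R : Type*} [CommRing R] {M : Matroid α} (hE : M.E.Finite)
    (a b : R) :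
    b ^ rk M M.E *
        ∑ A ∈ hE.toFinset.powerset, a ^ (rk M M.E - rk M ↑A) * b ^ (A.card - rk M ↑A) =
      cobEval M (a * b) (b + 1) := by
  have : M.Finite := ⟨hE⟩
  have hsub : ∀ A ∈ hE.toFinset.powerset, (A : Set α) ⊆ M.E := fun A hA => by
    simpa using Finset.mem_powerset.1 hA
  calc _ = ∑ A ∈ hE.toFinset.powerset, (a * b) ^ (rk M M.E - rk M ↑A) * b ^ A.card := by
        rw [Finset.mul_sum]
        exact Finset.sum_congr rfl fun A hA => pow_mul_pow_sub_mul_pow_sub a b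
          (rk_mono (hsub A hA)) (rk_le_card M A)
    _ = ∑ A ∈ hE.toFinset.powerset, ∑ B ∈ A.powerset,
          (a * b) ^ (rk M M.E - rk M ↑A) * ((b + 1) ^ B.card * (-1) ^ (A.card - B.card)) := by
        refine Finset.sum_congr rfl fun A _ => ?_
        have hbinom := Finset.sum_pow_mul_eq_add_pow (b + 1) (-1) A
        rw [add_neg_cancel_right] at hbinom
        rw [← hbinom, Finset.mul_sum]
    _ = ∑ B ∈ hE.toFinset.powerset, (b + 1) ^ B.card * charEval (M ／ ↑B) (a * b) := by
        rw [Finset.sum_powerset_sum_powerset_comm]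
        refine Finset.sum_congr rfl fun B hB => ?_
        rw [charEval_contract_eq_sum hE (hsub B hB), Finset.mul_sum]
        refine Finset.sum_congr rfl fun C hC => ?_
        have hCB : Disjoint C B := Finset.disjoint_of_subset_left (Finset.mem_powerset.1 hC)
          Finset.sdiff_disjoint
        rw [Finset.card_union_of_disjoint hCB, Nat.add_sub_cancel]
        ring
    _ = cobEval M (a * b) (b + 1) := by
        simp only [cobEval, dif_pos hE, contractSet_eq_contract]
        refine (Finset.sum_filter_of_ne fun B hB hne => ?_).symm
        by_contra hflat
        rw [charEval_contract_eq_zero_of_not_isFlat hE (hsub B hB) hflat, mul_zero] at hne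
        exact hne rfl

/-- the relation `(y-1)^{r(E)} T_M(x,y) = χ̄_M((x-1)(y-1), y)` between the
Tutte polynomial and Crapo's coboundary polynomial. -/
theorem tutte_coboundary (M : Matroid α) (hE : M.E.Finite) :
    (X 1 - 1) ^ (rk M M.E) * tutte M = cobEval M ((X 0 - 1) * (X 1 - 1)) (X 1) := by
  rw [tutte, dif_pos hE, pow_rk_mul_sum_eq_cobEval, sub_add_cancel]

end TuttePaper
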